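/- arXiv:2012.13757 — 2 statements merged into one kernel-verified Lean document; each statement's English description precedes it below -/
import Mathlib

section
/- Suppose R₀ > 1 and b ∈ (1/R₀, b*], where b* is the unique solution in (1/R₀,1] of 2·I_max(b*) = 1 - b*. Then I_max(b) ≤ (1 - b)/2 < 1/2. -/
/-! With `x = 1 / (b R₀) ∈ (0, 1)` one has `I_max(b) = 1 - (x - x log x)`, and `x ↦ x - x log x`
is increasing on `(0, 1]`, so `I_max` is increasing in `b`. Hence for `b ≤ b*`,
`I_max(b) ≤ I_max(b*) = (1 - b*) / 2 ≤ (1 - b) / 2`. -/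

open Real Set

lemma sub_mul_log_monotoneOn : MonotoneOn (fun x : ℝ => x - x * log x) (Ioc 0 1) := by
  rintro y ⟨hy, -⟩ x ⟨-, hx⟩ hyx
  have hx0 : 0 < x := hy.trans_le hyx
  -- `x log x - y log y = (x - y) log x + y log (x / y)`, and both terms are at most `x - y`.
  have hratio : y * log (x / y) ≤ x - y := by
    have := mul_le_mul_of_nonneg_left (log_le_sub_one_of_pos (div_pos hx0 hy)) hy.le
    rwa [mul_sub, mul_div_cancel₀ x hy.ne', mul_one] at this
  have hlog : (x - y) * log x ≤ 0 :=
    mul_nonpos_of_nonneg_of_nonpos (sub_nonneg.2 hyx) (log_nonpos hx0.le hx)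
  rw [log_div hx0.ne' hy.ne'] at hratio
  dsimp only
  linarith

lemma one_sub_inv_add_inv_mul_log_monotoneOn {R₀ : ℝ} (hR₀ : 0 < R₀) :
    MonotoneOn (fun b => 1 - 1 / (b * R₀) + 1 / (b * R₀) * log (1 / (b * R₀)))
      (Ici (1 / R₀)) := by
  intro b hb b' _ hbb'
  have hbR : 1 ≤ b * R₀ := by rwa [mem_Ici, div_le_iff₀ hR₀] at hb
  have hb'R : 0 < b' * R₀ := by nlinarith
  have hx : 1 / (b * R₀) ∈ Ioc 0 1 := ⟨by positivity, (div_le_one (by linarith)).2 hbR⟩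
  have hx' : 1 / (b' * R₀) ∈ Ioc 0 1 :=
    ⟨by positivity, (div_le_one hb'R).2 (hbR.trans (by gcongr))⟩
  have := sub_mul_log_monotoneOn hx' hx (by gcongr)
  dsimp only at this ⊢
  linarith

theorem Imax_le_half_general (R₀ : ℝ) (hR₀ : 1 < R₀)
    (Imax : ℝ → ℝ)
    (hImax : ∀ b, Imax b = 1 - 1 / (b * R₀) + 1 / (b * R₀) * Real.log (1 / (b * R₀)))
    (bstar : ℝ)
    (hbstar_eq : 2 * Imax bstar = 1 - bstar)
    (b : ℝ) (hb : b ∈ Set.Ioc (1 / R₀) bstar) :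
    Imax b ≤ (1 - b) / 2 ∧ (1 - b) / 2 < 1 / 2 := by
  have hR₀pos : 0 < R₀ := by linarith
  have hb_pos : 0 < b := (one_div_pos.2 hR₀pos).trans hb.1
  have hImax_mono : Imax b ≤ Imax bstar := by
    simpa only [hImax] using one_sub_inv_add_inv_mul_log_monotoneOn hR₀pos
      (mem_Ici.2 hb.1.le) (mem_Ici.2 (hb.1.le.trans hb.2)) hb.2
  constructor <;> linarith [hb.2]

theorem Imax_le_half (R₀ : ℝ) (hR₀ : 1 < R₀)
    (Imax : ℝ → ℝ)
    (hImax : ∀ b, Imax b = 1 - 1 / (b * R₀) + 1 / (b * R₀) * Real.log (1 / (b * R₀)))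
    (bstar : ℝ) (hbstar_mem : bstar ∈ Set.Ioc (1 / R₀) (1 : ℝ))
    (hbstar_eq : 2 * Imax bstar = 1 - bstar)
    (hbstar_uniq : ∀ b ∈ Set.Ioc (1 / R₀) (1 : ℝ), 2 * Imax b = 1 - b → b = bstar)
    (b : ℝ) (hb : b ∈ Set.Ioc (1 / R₀) bstar) :
    Imax b ≤ (1 - b) / 2 ∧ (1 - b) / 2 < 1 / 2 :=
  Imax_le_half_general R₀ hR₀ Imax hImax bstar hbstar_eq b hb
end

section
/- Define f_w(b) = 1 + b + 2·w̄ - (2/(b·R₀)) + (2/(b·R₀))·ln(1/(b·R₀)) for b ∈ (1/R₀, 1], where R₀ > 1 and 0 ≤ w̄ < (1/2)·(1 - 1/R₀). Then f_w(1/R₀) < 0, f_w(1) > 0, and f_w is strictly increasing on (1/R₀, 1]; hence there exists a unique b* ∈ (1/R₀, 1] with f_w(b*) = 0. -/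
/-!
Writing `u = b R₀`, the two logarithmic terms combine to `-2 (1 + log u) / u`, and
`(1 + log u) / u = e · log (e u) / (e u)` is antitone for `u ≥ 1` because `log x / x` is antitone
for `x ≥ e`. Hence `f_w` is the strictly increasing `b ↦ 1 + b + 2 w̄` plus a nondecreasing term on
`[1/R₀, ∞)`. At `b = 1/R₀` the logarithm vanishes and `f_w = 2 w̄ - (1 - 1/R₀) < 0`; at `b = 1`
the bound `log R₀ < R₀ - 1` gives `f_w > 0`. The intermediate value theorem and injectivity give
the unique root.
-/

open Real Set

theorem StrictMonoOn.existsUnique_mem_Ioc_eq {α δ : Type*} [ConditionallyCompleteLinearOrder α]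
    [TopologicalSpace α] [OrderTopology α] [DenselyOrdered α] [LinearOrder δ]
    [TopologicalSpace δ] [OrderClosedTopology δ] {f : α → δ} {a b : α} {y : δ}
    (hmono : StrictMonoOn f (Ioc a b)) (hab : a ≤ b) (hf : ContinuousOn f (Icc a b))
    (hya : f a < y) (hyb : y ≤ f b) :
    ∃! x, x ∈ Ioc a b ∧ f x = y := by
  obtain ⟨x, hx, hfx⟩ := intermediate_value_Icc hab hf ⟨hya.le, hyb⟩
  have hax : a ≠ x := by
    rintro rfl
    exact hya.ne hfx
  have hxIoc : x ∈ Ioc a b := ⟨lt_of_le_of_ne hx.1 hax, hx.2⟩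
  refine ⟨x, ⟨hxIoc, hfx⟩, ?_⟩
  rintro z ⟨hz, hfz⟩
  exact hmono.injOn hz hxIoc (hfz.trans hfx.symm)

theorem antitoneOn_one_add_log_div : AntitoneOn (fun u : ℝ ↦ (1 + log u) / u) (Ici 1) := by
  have hscale : ∀ u : ℝ, 0 < u → (1 + log u) / u = exp 1 * (log (exp 1 * u) / (exp 1 * u)) := by
    intro u hu
    rw [log_mul (exp_pos 1).ne' hu.ne', log_exp]
    field_simp
  have hmem : ∀ u : ℝ, u ∈ Ici 1 → exp 1 * u ∈ Ici (exp 1) := fun u hu ↦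
    le_mul_of_one_le_right (exp_pos 1).le hu
  intro u hu v hv huv
  dsimp only
  rw [hscale u (zero_lt_one.trans_le hu), hscale v (zero_lt_one.trans_le hv)]
  exact mul_le_mul_of_nonneg_left
    (log_div_self_antitoneOn (hmem u hu) (hmem v hv) (mul_le_mul_of_nonneg_left huv (exp_pos 1).le))
    (exp_pos 1).le

theorem one_add_log_div_lt_one {u : ℝ} (hu : 1 < u) : (1 + log u) / u < 1 := by
  rw [div_lt_one (zero_lt_one.trans hu)]
  linarith [log_lt_sub_one_of_pos (zero_lt_one.trans hu) hu.ne']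

noncomputable def fwFormula (R₀ w b : ℝ) : ℝ :=
  1 + b + 2 * w - 2 * ((1 + log (b * R₀)) / (b * R₀))

section fwFormula

variable {R₀ : ℝ} (w : ℝ)

theorem fwFormula_inv_self (hR₀ : 0 < R₀) : fwFormula R₀ w (1 / R₀) = 2 * w - (1 - 1 / R₀) := by
  rw [fwFormula, one_div_mul_cancel hR₀.ne', log_one]
  ring

theorem fwFormula_one_pos (hR₀ : 1 < R₀) (hw : 0 ≤ w) : 0 < fwFormula R₀ w 1 := by
  rw [fwFormula, one_mul]
  linarith [one_add_log_div_lt_one hR₀]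

theorem strictMonoOn_fwFormula (hR₀ : 0 < R₀) : StrictMonoOn (fwFormula R₀ w) (Ici (1 / R₀)) := by
  have hu : ∀ b ∈ Ici (1 / R₀), b * R₀ ∈ Ici 1 := fun _ hb ↦
    (div_le_iff₀ hR₀).1 hb
  intro a ha b hb hab
  have hanti := antitoneOn_one_add_log_div (hu a ha) (hu b hb)
    (mul_le_mul_of_nonneg_right hab.le hR₀.le)
  simp only [fwFormula] at hanti ⊢
  linarith

theorem continuousOn_fwFormula (hR₀ : 0 < R₀) : ContinuousOn (fwFormula R₀ w) (Ioi 0) := by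
  intro b hb
  have hu : b * R₀ ≠ 0 := (mul_pos hb hR₀).ne'
  unfold fwFormula
  exact ContinuousAt.continuousWithinAt (by fun_prop (disch := exact hu))

end fwFormula

theorem fw_exists_unique_root (R₀ w : ℝ) (hR₀ : 1 < R₀)
    (hw0 : 0 ≤ w) (hw : w < 1 / 2 * (1 - 1 / R₀))
    (fw : ℝ → ℝ)
    (hfw : ∀ b, fw b =
      1 + b + 2 * w - 2 / (b * R₀) + 2 / (b * R₀) * Real.log (1 / (b * R₀))) :
    fw (1 / R₀) < 0 ∧ 0 < fw 1 ∧ StrictMonoOn fw (Set.Ioc (1 / R₀) 1) ∧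
    ∃! bstar : ℝ, bstar ∈ Set.Ioc (1 / R₀) (1 : ℝ) ∧ fw bstar = 0 := by
  have hR₀pos : 0 < R₀ := zero_lt_one.trans hR₀
  obtain rfl : fw = fwFormula R₀ w := funext fun b ↦ by
    rw [hfw, fwFormula, one_div (b * R₀), log_inv]
    ring
  have hneg : fwFormula R₀ w (1 / R₀) < 0 := by
    rw [fwFormula_inv_self w hR₀pos]
    linarith
  have hpos := fwFormula_one_pos w hR₀ hw0
  have hmono : StrictMonoOn (fwFormula R₀ w) (Ioc (1 / R₀) 1) :=
    (strictMonoOn_fwFormula w hR₀pos).mono fun b hb ↦ hb.1.le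
  have hle : 1 / R₀ ≤ 1 := (div_le_one hR₀pos).2 hR₀.le
  have hcont : ContinuousOn (fwFormula R₀ w) (Icc (1 / R₀) 1) :=
    (continuousOn_fwFormula w hR₀pos).mono fun b hb ↦ (one_div_pos.2 hR₀pos).trans_le hb.1
  exact ⟨hneg, hpos, hmono, hmono.existsUnique_mem_Ioc_eq hle hcont hneg hpos.le⟩
end
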